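/- In a finite medium, for every state P, the cardinality of the token content of P equals |T|/2, where T is the set of tokens. -/

import Mathlib

variable {S : Type*}

/-- Result of applying message `m` (a list of tokens) to state `P`. -/
def mApply (m : List (S → S)) (P : S) : S := m.foldl (fun s τ => τ s) P

/-- `τ'` is a reverse of `τ`. -/
def IsReverse (τ τ' : S → S) : Prop := ∀ P Q : S, P ≠ Q → (τ P = Q ↔ τ' Q = P)

/-- `(S, T)` is a token system. -/
def IsTokenSystem (T : Set (S → S)) : Prop :=
  Nontrivial S ∧ T.Nonempty ∧ ∀ τ ∈ T, τ ≠ id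

/-- `m` is a message of the token system with token set `T`. -/
def IsMsg (T : Set (S → S)) (m : List (S → S)) : Prop := ∀ τ ∈ m, τ ∈ T

/-- `m` is stepwise effective for `P`. -/
def StepwiseEff : List (S → S) → S → Prop
  | [], _ => True
  | τ :: rest, P => τ P ≠ P ∧ StepwiseEff rest (τ P)

/-- `m` is consistent: it contains no token together with a reverse of it. -/
def Consistent (m : List (S → S)) : Prop :=
  ∀ τ ∈ m, ∀ τ' ∈ m, ¬ IsReverse τ τ'

/-- `m` is concise for `P`. -/
def Concise (T : Set (S → S)) (m : List (S → S)) (P : S) : Prop :=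
  IsMsg T m ∧ Consistent m ∧ StepwiseEff m P ∧ m.Nodup

/-- `m` is a return message for `P`. -/
def IsReturn (m : List (S → S)) (P : S) : Prop :=
  StepwiseEff m P ∧ mApply m P = P

/-- `m` is vacuous: its indices partition into pairs of mutually reverse tokens. -/
def Vacuous (m : List (S → S)) : Prop :=
  ∃ σ : Equiv.Perm (Fin m.length),
    (∀ i, σ i ≠ i) ∧ (∀ i, σ (σ i) = i) ∧
    ∀ i, IsReverse (m.get i) (m.get (σ i))

/-- `(S, T)` is a medium: token system satisfying [Ma] and [Mb]. -/
def IsMedium (T : Set (S → S)) : Prop :=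
  IsTokenSystem T ∧
  (∀ P Q : S, P ≠ Q → ∃ m, Concise T m P ∧ mApply m P = Q) ∧
  (∀ (m : List (S → S)) (P : S), IsMsg T m → IsReturn m P → Vacuous m)

/-- Content of a message: its set of tokens. -/
def msgContent (m : List (S → S)) : Set (S → S) := {τ | τ ∈ m}

/-- Token content of a state `P`. -/
def SContent (T : Set (S → S)) (P : S) : Set (S → S) :=
  {τ | ∃ (V : S) (m : List (S → S)), Concise T m V ∧ mApply m V = P ∧ τ ∈ m}

/-- `mr` is the reverse message `τ̃ₙ…τ̃₁` of `m = τ₁…τₙ`. -/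
def IsReverseOfMsg (m mr : List (S → S)) : Prop :=
  List.Forall₂ (fun τ τ' => IsReverse τ τ' ∧ IsReverse τ' τ) m mr.reverse

/-! Every token `τ` of a medium has a unique reverse `τ̃ ≠ τ`: a concise message from `τ P` to `P`
followed by `τ` is a return message, so [Mb] pairs `τ` with a reverse of it inside the consistent
concise part. Reversal then
maps the content of `P` bijectively onto the remaining tokens. At least one of `τ`, `τ̃` lies in
the content, since a concise message from `τ W` to `P` either contains one of them or stays concise
when `τ` is prefixed. Not both do: if `m` (from `V`, containing `τ`) and `m'` (from `V'`, containing
`τ̃`) both produce `P`, then `m`, the reverse of `m'`, and a concise message from `V'` to `V` form a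
return message containing `τ` at least twice and `τ̃` at most once, which [Mb] forbids. -/

namespace IsReverse

variable {τ τ' τ'' : S → S}

theorem symm (h : IsReverse τ τ') : IsReverse τ' τ := fun P Q hPQ => (h Q P hPQ.symm).symm

theorem apply_apply (h : IsReverse τ τ') {P : S} (hP : τ P ≠ P) : τ' (τ P) = P :=
  (h P (τ P) hP.symm).mp rfl

theorem unique (h' : IsReverse τ τ') (h'' : IsReverse τ τ'') : τ' = τ'' := by
  have key : ∀ {a b}, IsReverse τ a → IsReverse τ b → ∀ Q, b Q ≠ Q → a Q = b Q :=
    fun ha hb Q hQ => (ha _ _ hQ).mp (hb.symm.apply_apply hQ)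
  funext Q
  by_cases hQ'' : τ'' Q = Q
  · by_cases hQ' : τ' Q = Q
    · rw [hQ', hQ'']
    · exact (key h'' h' Q hQ').symm
  · exact key h' h'' Q hQ''

theorem unique_left (h' : IsReverse τ' τ) (h'' : IsReverse τ'' τ) : τ' = τ'' :=
  h'.symm.unique h''.symm

end IsReverse

theorem mApply_cons (τ : S → S) (m : List (S → S)) (P : S) :
    mApply (τ :: m) P = mApply m (τ P) := rfl

theorem mApply_append (m m' : List (S → S)) (P : S) :
    mApply (m ++ m') P = mApply m' (mApply m P) := List.foldl_append

theorem stepwiseEff_append (m m' : List (S → S)) (P : S) :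
    StepwiseEff (m ++ m') P ↔ StepwiseEff m P ∧ StepwiseEff m' (mApply m P) := by
  induction m generalizing P with
  | nil => simp [StepwiseEff, mApply]
  | cons τ m ih => simp only [List.cons_append, StepwiseEff, ih, mApply_cons, and_assoc]

def IsWalk (T : Set (S → S)) (m : List (S → S)) (P Q : S) : Prop :=
  IsMsg T m ∧ StepwiseEff m P ∧ mApply m P = Q

namespace IsWalk

variable {T : Set (S → S)} {m m' : List (S → S)} {τ : S → S} {P Q R : S}

theorem nil (T : Set (S → S)) (P : S) : IsWalk T [] P P := ⟨by simp [IsMsg], trivial, rfl⟩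

theorem singleton (hτ : τ ∈ T) (hP : τ P ≠ P) : IsWalk T [τ] P (τ P) :=
  ⟨by simpa [IsMsg] using hτ, ⟨hP, trivial⟩, rfl⟩

theorem append (h : IsWalk T m P Q) (h' : IsWalk T m' Q R) : IsWalk T (m ++ m') P R := by
  obtain ⟨hmsg, heff, rfl⟩ := h
  obtain ⟨hmsg', heff', rfl⟩ := h'
  refine ⟨fun τ hτ => ?_, (stepwiseEff_append _ _ _).mpr ⟨heff, heff'⟩, mApply_append _ _ _⟩
  exact (List.mem_append.mp hτ).elim (hmsg τ) (hmsg' τ)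

theorem of_cons (h : IsWalk T (τ :: m) P Q) : τ ∈ T ∧ τ P ≠ P ∧ IsWalk T m (τ P) Q :=
  ⟨h.1 τ List.mem_cons_self, h.2.1.1, fun x hx => h.1 x (List.mem_cons_of_mem τ hx), h.2.1.2, h.2.2⟩

end IsWalk

theorem Concise.isWalk {T : Set (S → S)} {m : List (S → S)} {P Q : S} (h : Concise T m P)
    (hQ : mApply m P = Q) : IsWalk T m P Q :=
  ⟨h.1, h.2.2.1, hQ⟩

theorem Concise.cons {T : Set (S → S)} {m : List (S → S)} {τ : S → S} {P : S}
    (hm : Concise T m (τ P)) (hτ : τ ∈ T) (hP : τ P ≠ P) (hτm : τ ∉ m)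
    (hrev : ∀ τ' ∈ τ :: m, ¬ IsReverse τ τ') : Concise T (τ :: m) P := by
  refine ⟨fun x hx => ?_, fun a ha b hb hab => ?_, ⟨hP, hm.2.2.1⟩, List.nodup_cons.mpr ⟨hτm, hm.2.2.2⟩⟩
  · exact (List.mem_cons.mp hx).elim (· ▸ hτ) (hm.1 x)
  rcases List.mem_cons.mp ha with rfl | ham
  · exact hrev b hb hab
  rcases List.mem_cons.mp hb with rfl | hbm
  · exact hrev a ha hab.symm
  · exact hm.2.1 a ham b hbm hab

theorem Vacuous.exists_reverse_mem_of_append_singleton {m : List (S → S)} {τ : S → S}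
    (h : Vacuous (m ++ [τ])) : ∃ τ' ∈ m, IsReverse τ τ' := by
  obtain ⟨σ, hσne, -, hσ⟩ := h
  let last : Fin (m ++ [τ]).length := ⟨m.length, by simp⟩
  have hlast : (σ last : ℕ) < m.length := by
    have hlt := (σ last).isLt
    have hne : (σ last : ℕ) ≠ m.length := fun h => hσne last (Fin.ext h)
    simp only [List.length_append, List.length_singleton] at hlt
    omega
  refine ⟨m[(σ last : ℕ)], List.getElem_mem hlast, ?_⟩
  simpa [last, List.getElem_append_left hlast] using hσ last

theorem Vacuous.count_eq [DecidableEq (S → S)] {m : List (S → S)} {τ τ' : S → S}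
    (h : Vacuous m) (hr : IsReverse τ τ') : m.count τ = m.count τ' := by
  obtain ⟨σ, -, hσσ, hσ⟩ := h
  have hcount : ∀ a, (Finset.univ.filter fun i : Fin m.length => m.get i = a).card = m.count a :=
    fun a => Fin.card_filter_univ_eq_vector_get_eq_count a ⟨m, rfl⟩
  rw [← hcount, ← hcount]
  refine Finset.card_nbij' σ σ (fun i hi => ?_) (fun i hi => ?_) (fun i _ => hσσ i) (fun i _ => hσσ i)
  · simp only [Finset.coe_filter, Finset.mem_univ, true_and, Set.mem_ofPred_eq] at hi ⊢
    exact (hi ▸ hσ i).unique hr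
  · simp only [Finset.coe_filter, Finset.mem_univ, true_and, Set.mem_ofPred_eq] at hi ⊢
    exact (hi ▸ hσ i).unique hr.symm

theorem sContent_subset (T : Set (S → S)) (P : S) : SContent T P ⊆ T :=
  fun _ ⟨_, _, hm, _, hτm⟩ => hm.1 _ hτm

namespace IsMedium

variable {T : Set (S → S)} {m : List (S → S)} {τ τ' : S → S} {P Q : S}

theorem vacuous (hM : IsMedium T) (h : IsWalk T m P P) : Vacuous m :=
  hM.2.2 m P h.1 ⟨h.2.1, h.2.2⟩

theorem exists_concise (hM : IsMedium T) (P Q : S) : ∃ m, Concise T m P ∧ mApply m P = Q := by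
  by_cases h : P = Q
  · exact ⟨[], ⟨by simp [IsMsg], by simp [Consistent], trivial, List.nodup_nil⟩, h⟩
  · exact hM.2.1 P Q h

theorem exists_apply_ne (hM : IsMedium T) (hτ : τ ∈ T) : ∃ P, τ P ≠ P := by
  by_contra! h
  exact hM.1.2.2 τ hτ (funext h)

theorem exists_reverse (hM : IsMedium T) (hτ : τ ∈ T) : ∃ τ' ∈ T, IsReverse τ τ' ∧ τ' ≠ τ := by
  obtain ⟨P, hP⟩ := hM.exists_apply_ne hτ
  obtain ⟨m, hm, hmP⟩ := hM.exists_concise (τ P) P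
  have hret : IsWalk T (m ++ [τ]) (τ P) (τ P) := (hm.isWalk hmP).append (.singleton hτ hP)
  obtain ⟨τ', hτ'm, hτ'⟩ := (hM.vacuous hret).exists_reverse_mem_of_append_singleton
  refine ⟨τ', hm.1 τ' hτ'm, hτ', ?_⟩
  rintro rfl
  exact hm.2.1 τ' hτ'm τ' hτ'm hτ'

theorem not_isReverse_self (hM : IsMedium T) (hτ : τ ∈ T) : ¬ IsReverse τ τ := fun h =>
  let ⟨_, _, hτ', hne⟩ := hM.exists_reverse hτ
  hne (hτ'.unique h)

theorem exists_reverse_walk [DecidableEq (S → S)] (hM : IsMedium T) (h : IsWalk T m P Q) :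
    ∃ mr, IsWalk T mr Q P ∧ ∀ τ τ', IsReverse τ τ' → mr.count τ' = m.count τ := by
  induction m generalizing P with
  | nil =>
    obtain rfl : P = Q := h.2.2
    exact ⟨[], .nil T P, fun _ _ _ => rfl⟩
  | cons a m ih =>
    obtain ⟨haT, haP, hm⟩ := h.of_cons
    obtain ⟨a', ha'T, ha', -⟩ := hM.exists_reverse haT
    obtain ⟨mr, hmr, hcount⟩ := ih hm
    have hback : IsWalk T [a'] (a P) P := by
      have hne : a' (a P) ≠ a P := by rw [ha'.apply_apply haP]; exact haP.symm
      simpa only [ha'.apply_apply haP] using IsWalk.singleton ha'T hne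
    refine ⟨mr ++ [a'], hmr.append hback, fun τ τ' hr => ?_⟩
    have hiff : a' = τ' ↔ a = τ :=
      ⟨fun h => (h ▸ ha').unique_left hr, fun h => ha'.unique (h ▸ hr)⟩
    rw [List.count_append, hcount τ τ' hr, List.count_singleton, List.count_cons]
    simp [hiff]

theorem notMem_sContent_of_isReverse (hM : IsMedium T) (hr : IsReverse τ τ')
    (hτ : τ ∈ SContent T P) : τ' ∉ SContent T P := by
  classical
  rintro ⟨V', m', hm', hm'P, hτ'm'⟩
  obtain ⟨V, m, hm, hmP, hτm⟩ := hτ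
  obtain ⟨mr, hmr, hcount⟩ := hM.exists_reverse_walk (hm'.isWalk hm'P)
  obtain ⟨n, hn, hnV⟩ := hM.exists_concise V' V
  have hvac := hM.vacuous (((hm.isWalk hmP).append hmr).append (hn.isWalk hnV))
  have h1 : m.count τ = 1 := List.count_eq_one_of_mem hm.2.2.2 hτm
  have h2 : m.count τ' = 0 := List.count_eq_zero.mpr fun h => hm.2.1 τ hτm τ' h hr
  have h3 : mr.count τ = 1 := by
    rw [hcount τ' τ hr.symm]
    exact List.count_eq_one_of_mem hm'.2.2.2 hτ'm'
  have h4 : mr.count τ' = 0 := by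
    rw [hcount τ τ' hr]
    exact List.count_eq_zero.mpr fun h => hm'.2.1 τ' hτ'm' τ h hr.symm
  have h5 : n.count τ' ≤ 1 := List.nodup_iff_count_le_one.mp hn.2.2.2 τ'
  have := hvac.count_eq hr
  simp only [List.count_append] at this
  omega

theorem mem_sContent_or_of_isReverse (hM : IsMedium T) (hτ : τ ∈ T) (hr : IsReverse τ τ') :
    τ ∈ SContent T P ∨ τ' ∈ SContent T P := by
  obtain ⟨W, hW⟩ := hM.exists_apply_ne hτ
  obtain ⟨m, hm, hmP⟩ := hM.exists_concise (τ W) P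
  by_cases hτm : τ ∈ m
  · exact .inl ⟨_, m, hm, hmP, hτm⟩
  by_cases hτ'm : τ' ∈ m
  · exact .inr ⟨_, m, hm, hmP, hτ'm⟩
  refine .inl ⟨W, τ :: m, hm.cons hτ hW hτm fun x hx hrx => ?_, hmP, List.mem_cons_self⟩
  obtain rfl := hr.unique hrx
  rcases List.mem_cons.mp hx with rfl | hx
  · exact hM.not_isReverse_self hτ hr
  · exact hτ'm hx

theorem reverse_mem_sContent_iff (hM : IsMedium T) (hτ : τ ∈ T) (hr : IsReverse τ τ') :
    τ' ∈ SContent T P ↔ τ ∉ SContent T P :=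
  ⟨fun h' h => hM.notMem_sContent_of_isReverse hr h h',
    (hM.mem_sContent_or_of_isReverse hτ hr).resolve_left⟩

end IsMedium

/-- In a finite medium, the cardinality of the token content of any state is `|T| / 2`. -/
theorem stmt6 {S : Type*} [Finite S] {T : Set (S → S)} (hM : IsMedium T) (P : S) :
    (SContent T P).ncard = T.ncard / 2 := by
  choose! rev hrevT hrev _ using fun τ (hτ : τ ∈ T) => hM.exists_reverse hτ
  have hC := sContent_subset T P
  have hrev_rev : ∀ τ ∈ T, rev (rev τ) = τ := fun τ hτ =>
    (hrev _ (hrevT τ hτ)).unique (hrev τ hτ).symm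
  have hcompl : (SContent T P).ncard = (T \ SContent T P).ncard := by
    refine Set.ncard_congr (fun τ _ => rev τ)
      (fun τ hτ => ⟨hrevT τ (hC hτ), fun h => ?_⟩)
      (fun a b ha hb hab => (hrev a (hC ha)).unique_left (hab ▸ hrev b (hC hb)))
      (fun τ ⟨hτT, hτP⟩ => ⟨rev τ, (hM.reverse_mem_sContent_iff hτT (hrev τ hτT)).mpr hτP,
        hrev_rev τ hτT⟩)
    exact (hM.reverse_mem_sContent_iff (hC hτ) (hrev τ (hC hτ))).mp h hτ
  have := Set.ncard_sdiff_add_ncard_of_subset hC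
  omega
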